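/- arXiv:2012.05529 — 9 statements merged into one kernel-verified Lean document; each statement's English description precedes it below -/
import Mathlib

section
/- Let w* ∈ ℝⁿ be a unit vector, let v ∈ ℝᵐ be nonzero, and define f(w) = (‖v‖²/(2π))·arccos(⟨w, w*⟩/‖w‖) for nonzero w ∈ ℝⁿ. Let Q be either Q₂ = {δ·s : δ ≥ 0, s ∈ {−1,1}ⁿ} or Q₃ = {δ·s : δ ≥ 0, s ∈ {−1,0,1}ⁿ}. If p ∈ Q is nonzero and minimizes the Euclidean distance ‖w* − q‖ over all q ∈ Q, then for every δ > 0 and every nonzero q ∈ Q, f(δ·p) ≤ f(q); that is, every positive multiple of a nearest point to w* in Q is a global minimizer of f over the nonzero elements of Q. -/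
open Real

/-- Euclidean norm of a vector in `Fin k → ℝ`. -/
noncomputable def euclNorm {k : ℕ} (x : Fin k → ℝ) : ℝ := Real.sqrt (∑ i, x i ^ 2)

/-!
The quantized sets are cones. Along the ray through a nonzero `q` the distance to `w` is
minimized at the projection of `w`, at squared distance `‖w‖² - cos²`, where
`cos = ⟪q, w⟫ / ‖q‖`. Every point `p` is at squared distance at least `‖w‖² - cos(p)²`,
so a nearest point `p` of the cone has the largest cosine among points of positive cosine;
comparing with `0` shows that its own cosine is positive. Since `f` is a positive multiple
of `arccos ∘ cos`, which is antitone and invariant under positive scaling, the claim follows.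
-/

section InnerProductSpace

open scoped RealInnerProductSpace

variable {E : Type*} [NormedAddCommGroup E] [InnerProductSpace ℝ E]

lemma sq_norm_sub_sq_inner_div_norm_le (w x : E) :
    ‖w‖ ^ 2 - (⟪x, w⟫ / ‖x‖) ^ 2 ≤ ‖w - x‖ ^ 2 := by
  rcases eq_or_ne x 0 with rfl | hx
  · simp
  have hsq : (⟪x, w⟫ / ‖x‖ - ‖x‖) ^ 2 = (⟪x, w⟫ / ‖x‖) ^ 2 - 2 * ⟪x, w⟫ + ‖x‖ ^ 2 := by
    field_simp
    ring
  rw [norm_sub_sq_real, real_inner_comm x w]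
  linarith [sq_nonneg (⟪x, w⟫ / ‖x‖ - ‖x‖)]

lemma sq_norm_sub_inner_div_sq_norm_smul (w x : E) :
    ‖w - (⟪x, w⟫ / ‖x‖ ^ 2) • x‖ ^ 2 = ‖w‖ ^ 2 - (⟪x, w⟫ / ‖x‖) ^ 2 := by
  rcases eq_or_ne x 0 with rfl | hx
  · simp
  rw [norm_sub_sq_real, norm_smul, real_inner_smul_right, real_inner_comm, Real.norm_eq_abs,
    mul_pow, sq_abs]
  field_simp
  ring

lemma inner_pos_of_norm_sub_le_norm {w p : E} (hp : p ≠ 0) (h : ‖w - p‖ ≤ ‖w‖) :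
    0 < ⟪p, w⟫ := by
  have hsq : ‖w - p‖ ^ 2 ≤ ‖w‖ ^ 2 := by gcongr
  rw [norm_sub_sq_real, real_inner_comm] at hsq
  nlinarith [norm_pos_iff.mpr hp]

lemma inner_smul_div_norm_smul {t : ℝ} (ht : 0 < t) (x w : E) :
    ⟪t • x, w⟫ / ‖t • x‖ = ⟪x, w⟫ / ‖x‖ := by
  rw [real_inner_smul_left, norm_smul, Real.norm_of_nonneg ht.le, mul_div_mul_left _ _ ht.ne']

theorem inner_div_norm_le_of_forall_norm_sub_le {C : Set E}
    (hC : ∀ x ∈ C, ∀ t : ℝ, 0 ≤ t → t • x ∈ C) {w p : E} (hp : p ≠ 0)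
    (hmin : ∀ q ∈ C, ‖w - p‖ ≤ ‖w - q‖) {q : E} (hq : q ∈ C) :
    ⟪q, w⟫ / ‖q‖ ≤ ⟪p, w⟫ / ‖p‖ := by
  have hcos_p : 0 < ⟪p, w⟫ / ‖p‖ := by
    have h0 : ‖w - p‖ ≤ ‖w‖ := by simpa using hmin _ (hC q hq 0 le_rfl)
    exact div_pos (inner_pos_of_norm_sub_le_norm hp h0) (norm_pos_iff.mpr hp)
  rcases le_or_gt (⟪q, w⟫ / ‖q‖) 0 with hcos_q | hcos_q
  · linarith
  have hproj : (⟪q, w⟫ / ‖q‖ ^ 2) • q ∈ C := by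
    refine hC q hq _ ?_
    rw [sq, ← div_div]
    exact div_nonneg hcos_q.le (norm_nonneg q)
  have hsq : (⟪q, w⟫ / ‖q‖) ^ 2 ≤ (⟪p, w⟫ / ‖p‖) ^ 2 := by
    have h := pow_le_pow_left₀ (norm_nonneg _) (hmin _ hproj) 2
    rw [sq_norm_sub_inner_div_sq_norm_smul] at h
    linarith [sq_norm_sub_sq_inner_div_norm_le w p]
  exact le_of_sq_le_sq hsq hcos_p.le

end InnerProductSpace

lemma smul_mem_setOf_nonneg_smul {M : Type*} [AddCommMonoid M] [Module ℝ M] (S : M → Prop)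
    {x : M} (hx : x ∈ {x | ∃ δ : ℝ, 0 ≤ δ ∧ ∃ s, S s ∧ x = δ • s}) {t : ℝ} (ht : 0 ≤ t) :
    t • x ∈ {x | ∃ δ : ℝ, 0 ≤ δ ∧ ∃ s, S s ∧ x = δ • s} := by
  obtain ⟨δ, hδ, s, hs, rfl⟩ := hx
  exact ⟨t * δ, mul_nonneg ht hδ, s, hs, smul_smul t δ s⟩

lemma euclNorm_eq_norm_toLp {k : ℕ} (x : Fin k → ℝ) :
    euclNorm x = ‖WithLp.toLp 2 x‖ := by
  simp [euclNorm, EuclideanSpace.norm_eq]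

lemma sum_mul_eq_inner_toLp {k : ℕ} (x y : Fin k → ℝ) :
    ∑ j, x j * y j = inner ℝ (WithLp.toLp 2 x) (WithLp.toLp 2 y) := by
  simp [PiLp.inner_apply, mul_comm]

theorem stmt1_general (m n : ℕ)
    (v : Fin m → ℝ) (wstar : Fin n → ℝ)
    (f : (Fin n → ℝ) → ℝ)
    (hf : ∀ w : Fin n → ℝ,
      f w = euclNorm v ^ 2 / (2 * π) * Real.arccos ((∑ j, w j * wstar j) / euclNorm w))
    (Q : Set (Fin n → ℝ))
    (hQ : Q = {x | ∃ δ : ℝ, 0 ≤ δ ∧ ∃ s : Fin n → ℝ,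
                (∀ i, s i = 1 ∨ s i = -1) ∧ x = δ • s} ∨
          Q = {x | ∃ δ : ℝ, 0 ≤ δ ∧ ∃ s : Fin n → ℝ,
                (∀ i, s i = -1 ∨ s i = 0 ∨ s i = 1) ∧ x = δ • s})
    (p : Fin n → ℝ) (hp0 : p ≠ 0)
    (hpmin : ∀ q ∈ Q, euclNorm (wstar - p) ≤ euclNorm (wstar - q)) :
    ∀ δ : ℝ, 0 < δ → ∀ q ∈ Q, q ≠ 0 → f (δ • p) ≤ f q := by
  intro δ hδ q hq _
  have hcone : ∀ x ∈ Q, ∀ t : ℝ, 0 ≤ t → t • x ∈ Q := by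
    intro x hx t ht
    rcases hQ with rfl | rfl <;> exact smul_mem_setOf_nonneg_smul _ hx ht
  have hcos := inner_div_norm_le_of_forall_norm_sub_le
    (C := {x : EuclideanSpace ℝ (Fin n) | x.ofLp ∈ Q})
    (fun x hx t ht => hcone _ hx t ht) (w := WithLp.toLp 2 wstar)
    (WithLp.toLp_injective 2 |>.ne hp0) (fun x hx => by
      simpa [euclNorm_eq_norm_toLp] using hpmin _ hx) (q := WithLp.toLp 2 q) hq
  simp only [hf, sum_mul_eq_inner_toLp, euclNorm_eq_norm_toLp, WithLp.toLp_smul,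
    inner_smul_div_norm_smul hδ]
  exact mul_le_mul_of_nonneg_left (arccos_le_arccos hcos) (by positivity)

/-- Every positive multiple of a nearest point to the unit teacher vector `w*` in the
(binary or ternary) quantized set `Q` is a global minimizer over `Q \ {0}` of the
population loss `f(w) = ‖v‖²/(2π) · arccos(⟨w, w*⟩/‖w‖)`. -/
theorem stmt1 (m n : ℕ) (hm : 1 ≤ m) (hn : 1 ≤ n)
    (v : Fin m → ℝ) (hv : v ≠ 0) (wstar : Fin n → ℝ) (hws : euclNorm wstar = 1)
    (f : (Fin n → ℝ) → ℝ)
    (hf : ∀ w : Fin n → ℝ,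
      f w = euclNorm v ^ 2 / (2 * π) * Real.arccos ((∑ j, w j * wstar j) / euclNorm w))
    (Q : Set (Fin n → ℝ))
    (hQ : Q = {x | ∃ δ : ℝ, 0 ≤ δ ∧ ∃ s : Fin n → ℝ,
                (∀ i, s i = 1 ∨ s i = -1) ∧ x = δ • s} ∨
          Q = {x | ∃ δ : ℝ, 0 ≤ δ ∧ ∃ s : Fin n → ℝ,
                (∀ i, s i = -1 ∨ s i = 0 ∨ s i = 1) ∧ x = δ • s})
    (p : Fin n → ℝ) (hpQ : p ∈ Q) (hp0 : p ≠ 0)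
    (hpmin : ∀ q ∈ Q, euclNorm (wstar - p) ≤ euclNorm (wstar - q)) :
    ∀ δ : ℝ, 0 < δ → ∀ q ∈ Q, q ≠ 0 → f (δ • p) ≤ f q :=
  stmt1_general m n v wstar f hf Q hQ p hp0 hpmin
end

section
/- Let n ≥ 1 and let y ∈ ℝⁿ be nonzero. Define s̄(y) ∈ {−1,1}ⁿ entrywise by s̄(y)_i = 1 if y_i ≥ 0 and −1 if y_i < 0, and set p = (‖y‖₁/n)·s̄(y), where ‖y‖₁ = ∑_i |y_i|. Then p minimizes the Euclidean distance to y over the binary quantized set: for every δ ≥ 0 and every s ∈ {−1,1}ⁿ, ‖y − p‖ ≤ ‖y − δ·s‖. -/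
open Real

/-- ℓ¹ norm of a vector in `Fin k → ℝ`. -/
noncomputable def l1Norm {k : ℕ} (x : Fin k → ℝ) : ℝ := ∑ i, |x i|

/-- The sign function `s̄(a) = 1` if `a ≥ 0`, `−1` if `a < 0`. -/
noncomputable def bsign (a : ℝ) : ℝ := if 0 ≤ a then 1 else -1

lemma bsign_mul (a : ℝ) : a * bsign a = |a| := by
  unfold bsign
  split
  · rw [abs_of_nonneg (by assumption)]; ring
  · rw [abs_of_neg (by linarith)]; ring

lemma bsign_sq (a : ℝ) : bsign a ^ 2 = 1 := by
  unfold bsign; split <;> ring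

/-- The point `p = (‖y‖₁/n)·s̄(y)` minimizes the Euclidean distance to `y`
over the binary quantized set `Q₂ = {δ·s : δ ≥ 0, s ∈ {−1,1}ⁿ}`. -/
theorem stmt3 (n : ℕ) (hn : 1 ≤ n) (y : Fin n → ℝ) (hy : y ≠ 0)
    (p : Fin n → ℝ) (hp : ∀ i, p i = l1Norm y / n * bsign (y i)) :
    ∀ δ : ℝ, 0 ≤ δ → ∀ s : Fin n → ℝ, (∀ i, s i = 1 ∨ s i = -1) →
      euclNorm (y - p) ≤ euclNorm (y - δ • s) := by
  intro δ hδ s hs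
  unfold euclNorm
  apply Real.sqrt_le_sqrt
  have hn' : (0:ℝ) < n := by exact_mod_cast Nat.lt_of_lt_of_le Nat.zero_lt_one hn
  set L := l1Norm y with hL
  set A := ∑ i, (y i)^2 with hA
  set T := ∑ i, y i * s i with hT
  have hTL : T ≤ L := by
    rw [hT, hL]; unfold l1Norm
    apply Finset.sum_le_sum
    intro i _
    calc y i * s i ≤ |y i * s i| := le_abs_self _
      _ = |y i| := by rcases hs i with h|h <;> simp [h, abs_mul]
  have e1 : ∑ i, (y i - p i)^2 = A - L^2/n := by
    have step : ∀ i ∈ Finset.univ, (y i - p i)^2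
        = (y i)^2 - 2*(L/n)*|y i| + (L/n)^2 := by
      intro i _
      rw [hp i]
      have h1 := bsign_mul (y i)
      have h2 := bsign_sq (y i)
      linear_combination (-2*(L/↑n)) * h1 + (L/↑n)^2 * h2
    rw [Finset.sum_congr rfl step]
    have hsum : ∑ i : Fin n, |y i| = L := by rw [hL]; rfl
    rw [Finset.sum_add_distrib, Finset.sum_sub_distrib, ← Finset.mul_sum, hsum,
      Finset.sum_const, Finset.card_univ, Fintype.card_fin, nsmul_eq_mul]
    rw [hA]
    field_simp
    ring
  have e2 : ∑ i, (y i - δ • s i)^2 = A - 2*δ*T + n*δ^2 := by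
    have step : ∀ i ∈ Finset.univ, (y i - δ • s i)^2
        = (y i)^2 - 2*δ*(y i * s i) + δ^2 := by
      intro i _
      have hs2 : (s i)^2 = 1 := by rcases hs i with h|h <;> rw [h] <;> ring
      simp only [smul_eq_mul]
      linear_combination δ^2 * hs2
    rw [Finset.sum_congr rfl step, Finset.sum_add_distrib, Finset.sum_sub_distrib,
      ← Finset.mul_sum, ← hT, Finset.sum_const, Finset.card_univ, Fintype.card_fin,
      nsmul_eq_mul, hA]
  have key : A - L^2/n ≤ A - 2*δ*T + n*δ^2 := by
    have h1 : L^2/n * n = L^2 := by field_simp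
    nlinarith [sq_nonneg (L - n*δ), mul_nonneg hδ (sub_nonneg.mpr hTL), hn']
  calc ∑ i, (y - p) i ^ 2 = ∑ i, (y i - p i)^2 := by simp [Pi.sub_apply]
    _ = A - L^2/n := e1
    _ ≤ A - 2*δ*T + n*δ^2 := key
    _ = ∑ i, (y i - δ • s i)^2 := e2.symm
    _ = ∑ i, (y - δ • s) i ^ 2 := by simp [Pi.sub_apply]
end

section
/- Let n ≥ 1 and let y ∈ ℝⁿ be nonzero. Choose a permutation j_1, …, j_n of {1, …, n} with |y_{j_1}| ≥ |y_{j_2}| ≥ … ≥ |y_{j_n}|, and for 1 ≤ j ≤ n let y_[j] ∈ ℝⁿ agree with y on coordinates j_1, …, j_j and be 0 elsewhere. Let j* ∈ {1, …, n} maximize ‖y_[j]‖₁²/j over j ∈ {1, …, n}, and set p = (‖y_{[j*]}‖₁ / j*)·sgn(y_{[j*]}), where sgn acts entrywise with sgn(a) = 1 if a > 0, 0 if a = 0, −1 if a < 0. Then p minimizes the Euclidean distance to y over the ternary quantized set: for every δ ≥ 0 and every s ∈ {−1,0,1}ⁿ, ‖y − p‖ ≤ ‖y − δ·s‖. -/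
open Real

lemma orderEmb_le_self {n j : ℕ} (T : Finset (Fin n)) (hT : T.card = j) :
    ∀ m (h : m < j), m ≤ ((T.orderEmbOfFin hT ⟨m, h⟩ : Fin n) : ℕ) := by
  intro m
  induction m with
  | zero => intro h; exact Nat.zero_le _
  | succ m ih =>
    intro h
    have hm : m < j := Nat.lt_of_succ_lt h
    have hlt := (T.orderEmbOfFin hT).strictMono
      (show (⟨m, hm⟩ : Fin j) < ⟨m+1, h⟩ from by simp [Fin.lt_def])
    have := ih hm
    rw [Fin.lt_def] at hlt
    omega

lemma top_sum {n j : ℕ} (hjn : j ≤ n) (w : Fin n → ℝ)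
    (hmono : ∀ a b : Fin n, a ≤ b → w b ≤ w a)
    (T : Finset (Fin n)) (hT : T.card = j) :
    ∑ i ∈ T, w i ≤ ∑ i : Fin n, if (i : ℕ) < j then w i else 0 := by
  have hTe : T = Finset.univ.map (T.orderEmbOfFin hT).toEmbedding := by
    ext i
    simp only [Finset.mem_map, Finset.mem_univ, true_and]
    constructor
    · intro hi
      have : i ∈ Set.range (T.orderEmbOfFin hT) := by
        rw [Finset.range_orderEmbOfFin]; exact hi
      obtain ⟨k, hk⟩ := this
      exact ⟨k, hk⟩
    · rintro ⟨k, rfl⟩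
      exact T.orderEmbOfFin_mem hT k
  have hfilter : Finset.univ.filter (fun i : Fin n => (i : ℕ) < j)
      = Finset.univ.map (Fin.castLEEmb hjn) := by
    ext i
    simp only [Finset.mem_filter, Finset.mem_univ, true_and, Finset.mem_map]
    constructor
    · intro hi; exact ⟨⟨i, hi⟩, by ext; simp⟩
    · rintro ⟨k, rfl⟩
      simpa using k.2
  rw [hTe, Finset.sum_map, ← Finset.sum_filter, hfilter, Finset.sum_map]
  apply Finset.sum_le_sum
  intro k _
  apply hmono
  rw [Fin.le_def]
  simpa using orderEmb_le_self T hT k k.2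

/-- Closed form of the projection onto the ternary quantized set
`Q₃ = {δ·s : δ ≥ 0, s ∈ {−1,0,1}ⁿ}`: with `σ` sorting the coordinates of `y` by
decreasing absolute value, `trunc j` keeping the `j` largest-in-magnitude entries of `y`
and zeroing the rest, and `j*` maximizing `‖y_[j]‖₁²/j`, the point
`p = (‖y_[j*]‖₁/j*)·sgn(y_[j*])` minimizes the Euclidean distance to `y` over `Q₃`. -/
theorem stmt4 (n : ℕ) (hn : 1 ≤ n) (y : Fin n → ℝ) (hy : y ≠ 0)
    (σ : Equiv.Perm (Fin n))
    (hσ : ∀ a b : Fin n, a ≤ b → |y (σ b)| ≤ |y (σ a)|)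
    (trunc : ℕ → Fin n → ℝ)
    (htrunc : ∀ (j : ℕ) (i : Fin n),
      trunc j i = if ∃ l : Fin n, (l : ℕ) < j ∧ σ l = i then y i else 0)
    (jstar : ℕ) (hj1 : 1 ≤ jstar) (hj2 : jstar ≤ n)
    (hjmax : ∀ j : ℕ, 1 ≤ j → j ≤ n →
      l1Norm (trunc j) ^ 2 / j ≤ l1Norm (trunc jstar) ^ 2 / jstar)
    (p : Fin n → ℝ)
    (hp : ∀ i, p i = l1Norm (trunc jstar) / jstar * Real.sign (trunc jstar i)) :
    ∀ δ : ℝ, 0 ≤ δ → ∀ s : Fin n → ℝ, (∀ i, s i = -1 ∨ s i = 0 ∨ s i = 1) →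
      euclNorm (y - p) ≤ euclNorm (y - δ • s) := by
  intro δ hδ s hs
  classical
  set L := l1Norm (trunc jstar) with hLdef
  have hjsR : (0:ℝ) < (jstar:ℝ) := by exact_mod_cast Nat.lt_of_lt_of_le Nat.zero_lt_one hj1
  have hjs0 : (jstar:ℝ) ≠ 0 := ne_of_gt hjsR
  have htσ : ∀ (j : ℕ) (l : Fin n), trunc j (σ l) = if (l:ℕ) < j then y (σ l) else 0 := by
    intro j l
    rw [htrunc]
    by_cases h : (l:ℕ) < j
    · rw [if_pos ⟨l, h, rfl⟩, if_pos h]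
    · rw [if_neg, if_neg h]
      rintro ⟨l', hl', he⟩
      exact h ((σ.injective he) ▸ hl')
  have hLnn : 0 ≤ L := Finset.sum_nonneg fun i _ => abs_nonneg _
  have hsign : ∀ a : ℝ, a * Real.sign a = |a| := by
    intro a
    rcases lt_trichotomy a 0 with h | h | h
    · rw [Real.sign_of_neg h, abs_of_neg h]; ring
    · simp [h]
    · rw [Real.sign_of_pos h, abs_of_pos h]; ring
  have hyp : ∑ i, y i * p i = L^2 / jstar := by
    have hterm : ∀ i, y i * p i = L / jstar * |trunc jstar i| := by
      intro i
      rw [hp, htrunc]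
      by_cases h : ∃ l : Fin n, (l:ℕ) < jstar ∧ σ l = i
      · rw [if_pos h, ← hsign (y i)]; ring
      · rw [if_neg h]; simp
    rw [Finset.sum_congr rfl (fun i _ => hterm i), ← Finset.mul_sum]
    have hLL : (∑ i, |trunc jstar i|) = L := by rw [hLdef]; rfl
    rw [hLL]
    field_simp
  have hpsq : ∑ i, p i ^ 2 ≤ L^2 / jstar := by
    have h1 : ∀ i, p i ^ 2 = (L/jstar)^2 * Real.sign (trunc jstar i)^2 := fun i => by
      rw [hp]; ring
    have h2 : ∑ i, Real.sign (trunc jstar i)^2 ≤ (jstar:ℝ) := by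
      rw [← Equiv.sum_comp σ (fun i => Real.sign (trunc jstar i)^2)]
      have key : ∀ l : Fin n,
          Real.sign (trunc jstar (σ l))^2 ≤ if (l:ℕ) < jstar then (1:ℝ) else 0 := by
        intro l; rw [htσ]; by_cases h : (l:ℕ) < jstar
        · rw [if_pos h, if_pos h]
          rcases Real.sign_apply_eq (y (σ l)) with h' | h' | h' <;> rw [h'] <;> norm_num
        · simp [if_neg h]
      calc ∑ l, Real.sign (trunc jstar (σ l))^2
          ≤ ∑ l : Fin n, (if (l:ℕ) < jstar then (1:ℝ) else 0) :=
            Finset.sum_le_sum (fun l _ => key l)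
        _ = (jstar:ℝ) := by
            rw [Fin.sum_univ_eq_sum_range (fun m => if m < jstar then (1:ℝ) else 0)]
            rw [Finset.sum_ite, Finset.sum_const, Finset.sum_const]
            have hfil : (Finset.range n).filter (fun m => m < jstar) = Finset.range jstar := by
              ext m; simp; omega
            simp [hfil]
    calc ∑ i, p i ^ 2 = (L/jstar)^2 * ∑ i, Real.sign (trunc jstar i)^2 := by
          rw [Finset.mul_sum]; exact Finset.sum_congr rfl fun i _ => h1 i
      _ ≤ (L/jstar)^2 * jstar := by
          exact mul_le_mul_of_nonneg_left h2 (by positivity)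
      _ = L^2 / jstar := by field_simp
  have keyA : ∑ i, (y i - p i)^2 ≤ (∑ i, y i ^2) - L^2/jstar := by
    have expand : ∑ i, (y i - p i)^2
        = (∑ i, y i^2) - 2*(∑ i, y i * p i) + ∑ i, p i^2 := by
      rw [Finset.mul_sum, ← Finset.sum_sub_distrib, ← Finset.sum_add_distrib]
      exact Finset.sum_congr rfl fun i _ => by ring
    rw [expand, hyp]
    linarith [hpsq]
  have keyB : (∑ i, y i^2) - L^2/jstar ≤ ∑ i, (y i - δ * s i)^2 := by
    set T := Finset.univ.filter (fun i => s i ≠ 0) with hT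
    set j := T.card with hj
    have hssq : ∀ i, s i ^ 2 = if s i = 0 then (0:ℝ) else 1 := by
      intro i; rcases hs i with h | h | h <;> simp [h]
    have hsum_ssq : ∑ i, s i^2 = (j:ℝ) := by
      rw [Finset.sum_congr rfl fun i _ => hssq i]
      rw [Finset.sum_ite, Finset.sum_const, Finset.sum_const]
      have hfeq : Finset.univ.filter (fun i => ¬ s i = 0) = T := rfl
      rw [hfeq]
      simp [hj]
    have hys : ∑ i, y i * s i ≤ ∑ i ∈ T, |y i| := by
      have h0 : ∑ i, y i * s i = ∑ i ∈ T, y i * s i := by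
        refine (Finset.sum_subset (Finset.subset_univ T) ?_).symm
        intro i _ hi
        have : s i = 0 := by
          by_contra h
          exact hi (by simp [hT, h])
        rw [this, mul_zero]
      rw [h0]
      apply Finset.sum_le_sum
      intro i hi
      have hsi : s i ≠ 0 := by
        simp only [hT, Finset.mem_filter, Finset.mem_univ, true_and] at hi
        exact hi
      have habs : |s i| = 1 := by
        rcases hs i with h | h | h
        · rw [h]; norm_num
        · exact absurd h hsi
        · rw [h]; norm_num
      calc y i * s i ≤ |y i * s i| := le_abs_self _
        _ = |y i| * |s i| := abs_mul _ _
        _ = |y i| := by rw [habs, mul_one]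
    by_cases hj0 : j = 0
    · have hTempty : T = ∅ := Finset.card_eq_zero.mp hj0
      have hs0 : ∀ i, s i = 0 := by
        intro i
        by_contra h
        have : i ∈ T := by simp [hT, h]
        rw [hTempty] at this
        exact absurd this (Finset.notMem_empty i)
      have heq : ∑ i, (y i - δ * s i)^2 = ∑ i, y i^2 :=
        Finset.sum_congr rfl fun i _ => by rw [hs0 i]; ring
      rw [heq]
      have : (0:ℝ) ≤ L^2/(jstar:ℝ) := by positivity
      linarith
    · have hj1' : 1 ≤ j := Nat.one_le_iff_ne_zero.mpr hj0
      have hjn : j ≤ n := by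
        have := T.card_le_univ
        simpa using this
      set Lj := l1Norm (trunc j) with hLj
      have hLjnn : 0 ≤ Lj := Finset.sum_nonneg fun i _ => abs_nonneg _
      have htop : ∑ i ∈ T, |y i| ≤ Lj := by
        have h1 : ∑ i ∈ T, |y i| = ∑ l ∈ T.map σ.symm.toEmbedding, |y (σ l)| := by
          rw [Finset.sum_map]
          exact Finset.sum_congr rfl fun i _ => by simp
        have hcard : (T.map σ.symm.toEmbedding).card = j := by rw [Finset.card_map]
        have h2 := top_sum hjn (fun l => |y (σ l)|) (fun a b hab => hσ a b hab) _ hcard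
        rw [h1]
        refine h2.trans_eq ?_
        have h3 : ∀ l : Fin n, (if (l:ℕ) < j then |y (σ l)| else 0) = |trunc j (σ l)| := by
          intro l; rw [htσ]; by_cases h : (l:ℕ) < j <;> simp [h]
        rw [Finset.sum_congr rfl fun l _ => h3 l]
        exact Equiv.sum_comp σ (fun i => |trunc j i|)
      have hmax := hjmax j hj1' hjn
      have expand : ∑ i, (y i - δ * s i)^2
          = (∑ i, y i^2) - 2*δ*(∑ i, y i * s i) + δ^2 * (j:ℝ) := by
        rw [← hsum_ssq, Finset.mul_sum, Finset.mul_sum, ← Finset.sum_sub_distrib,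
          ← Finset.sum_add_distrib]
        exact Finset.sum_congr rfl fun i _ => by ring
      rw [expand]
      have hys' : ∑ i, y i * s i ≤ Lj := hys.trans htop
      have hjpos : (0:ℝ) < (j:ℝ) := by exact_mod_cast hj1'
      have h5 : 2*δ*(∑ i, y i * s i) ≤ 2*δ*Lj :=
        mul_le_mul_of_nonneg_left hys' (by positivity)
      have h6 : 2*δ*Lj - δ^2*(j:ℝ) ≤ Lj^2/(j:ℝ) := by
        have hkey : (2*δ*Lj - δ^2*(j:ℝ)) * (j:ℝ) ≤ Lj^2 := by
          nlinarith [sq_nonneg ((j:ℝ)*δ - Lj)]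
        calc 2*δ*Lj - δ^2*(j:ℝ) = ((2*δ*Lj - δ^2*(j:ℝ)) * (j:ℝ))/(j:ℝ) := by
              field_simp
          _ ≤ Lj^2/(j:ℝ) := by gcongr
      have h7 : Lj^2/(j:ℝ) ≤ L^2/(jstar:ℝ) := hmax
      linarith
  unfold euclNorm
  apply Real.sqrt_le_sqrt
  calc ∑ i, (y - p) i ^2 = ∑ i, (y i - p i)^2 := rfl
    _ ≤ (∑ i, y i^2) - L^2/jstar := keyA
    _ ≤ ∑ i, (y i - δ * s i)^2 := keyB
    _ = ∑ i, (y - δ • s) i ^2 := rfl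
end

section
/- Consider the binary QUANT iteration with unit teacher vector w* ∈ ℝⁿ. If j ∈ {1, …, n} satisfies |w*_j| < 1/√n, then there are infinitely many t with w^t_j = 1/√n and infinitely many t with w^t_j = −1/√n. -/
open Real Filter

lemma aux_drift (η : ℕ → ℝ) (hη0 : ∀ t, 0 < η t)
    (hηsum : Tendsto (fun T => ∑ t ∈ Finset.range T, η t) atTop atTop)
    (a : ℕ → ℝ) (ε : ℝ) (hε : 0 < ε)
    (hstep : ∀ t, 0 < a t → a (t + 1) ≤ a t - ε * η t)
    (T : ℕ) : ∃ t, T ≤ t ∧ a t ≤ 0 := by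
  by_contra h
  push_neg at h
  have key : ∀ k, a (T + k) ≤ a T - ε * ∑ i ∈ Finset.range k, η (T + i) := by
    intro k
    induction k with
    | zero => simp
    | succ k ih =>
      have h1 := hstep (T + k) (h _ (Nat.le_add_right _ _))
      rw [Finset.sum_range_succ, show T + (k + 1) = (T + k) + 1 from rfl]
      calc a (T + k + 1) ≤ a (T + k) - ε * η (T + k) := h1
        _ ≤ a T - ε * ∑ i ∈ Finset.range k, η (T + i) - ε * η (T + k) := by linarith
        _ = a T - ε * (∑ i ∈ Finset.range k, η (T + i) + η (T + k)) := by ring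
  obtain ⟨N, hN1, hN2⟩ := ((hηsum.eventually_gt_atTop
      ((∑ t ∈ Finset.range T, η t) + a T / ε)).and (eventually_ge_atTop T)).exists
  set k := N - T with hk
  have hNk : N = T + k := by omega
  have hsum : ∑ t ∈ Finset.range N, η t
      = (∑ t ∈ Finset.range T, η t) + ∑ i ∈ Finset.range k, η (T + i) := by
    rw [hNk, Finset.sum_range_add]
  have htail : a T / ε < ∑ i ∈ Finset.range k, η (T + i) := by
    rw [hsum] at hN1; linarith
  rw [div_lt_iff₀ hε] at htail
  have h2 := key k
  have h3 := h (T + k) (Nat.le_add_right _ _)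
  nlinarith

/-- Binary QUANT iteration: if `|w*_j| < 1/√n`, then the `j`-th coordinate of the
quantized iterates equals `1/√n` infinitely often and `−1/√n` infinitely often. -/
theorem stmt5 (n m : ℕ) (hn : 1 ≤ n)
    (wstar : Fin n → ℝ) (hws : euclNorm wstar = 1)
    (v : Fin m → ℝ) (hv : v ≠ 0)
    (c : ℝ) (hc : c = euclNorm v ^ 2 / (2 * Real.sqrt (2 * π)))
    (η : ℕ → ℝ) (ηbar : ℝ) (hη0 : ∀ t, 0 < η t) (hηb : ∀ t, η t ≤ ηbar)
    (hηsum : Tendsto (fun T => ∑ t ∈ Finset.range T, η t) atTop atTop)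
    (y w : ℕ → Fin n → ℝ)
    (hw : ∀ t i, w t i = 1 / Real.sqrt n * bsign (y t i))
    (hy : ∀ t i, y (t + 1) i = y t i + η t * c * (wstar i - w t i))
    (j : Fin n) (hj : |wstar j| < 1 / Real.sqrt n) :
    {t | w t j = 1 / Real.sqrt n}.Infinite ∧
      {t | w t j = -(1 / Real.sqrt n)}.Infinite := by
  have hnpos : (0:ℝ) < (n:ℝ) := by exact_mod_cast Nat.lt_of_lt_of_le Nat.zero_lt_one hn
  have hsn : 0 < Real.sqrt n := Real.sqrt_pos.mpr hnpos
  set r := 1 / Real.sqrt n with hrdef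
  have hr : 0 < r := by positivity
  have hvpos : 0 < euclNorm v := by
    obtain ⟨i, hi⟩ := Function.ne_iff.mp hv
    unfold euclNorm
    exact Real.sqrt_pos.mpr
      (Finset.sum_pos' (fun i _ => sq_nonneg _) ⟨i, Finset.mem_univ i, pow_two_pos_of_ne_zero hi⟩)
  have hcpos : 0 < c := by
    have hπ := Real.pi_pos
    rw [hc]
    exact div_pos (pow_pos hvpos 2) (mul_pos two_pos (Real.sqrt_pos.mpr (by linarith)))
  obtain ⟨hj1, hj2⟩ := abs_lt.mp hj
  have hε1 : 0 < c * (r - wstar j) := mul_pos hcpos (by linarith)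
  have hε2 : 0 < c * (wstar j + r) := mul_pos hcpos (by linarith)
  have hstep_pos : ∀ t, 0 ≤ y t j → y (t + 1) j = y t j - c * (r - wstar j) * η t := by
    intro t ht
    rw [hy, hw, bsign, if_pos ht, hrdef]; ring
  have hstep_neg : ∀ t, y t j < 0 → y (t + 1) j = y t j + c * (wstar j + r) * η t := by
    intro t ht
    rw [hy, hw, bsign, if_neg (not_le.mpr ht), hrdef]; ring
  have hA : ∀ T, ∃ t, T ≤ t ∧ 0 ≤ y t j := by
    intro T
    obtain ⟨t, ht, h0⟩ := aux_drift η hη0 hηsum (fun t => -y t j) _ hε2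
      (fun t hpos => by
        have hneg : y t j < 0 := by simpa using hpos
        have := hstep_neg t hneg
        linarith) T
    exact ⟨t, ht, by simpa using h0⟩
  have hB : ∀ T, ∃ t, T ≤ t ∧ y t j < 0 := by
    intro T
    obtain ⟨t, ht, h0⟩ := aux_drift η hη0 hηsum (fun t => y t j) _ hε1
      (fun t hpos => by
        have := hstep_pos t hpos.le
        linarith) T
    rcases h0.lt_or_eq with hlt | heq
    · exact ⟨t, ht, hlt⟩
    · refine ⟨t + 1, by omega, ?_⟩
      have hs := hstep_pos t heq.ge
      have := mul_pos hε1 (hη0 t)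
      rw [hs, heq]; linarith
  have hwp : ∀ t, 0 ≤ y t j → w t j = r := by
    intro t ht; rw [hw, bsign, if_pos ht, hrdef]; ring
  have hwn : ∀ t, y t j < 0 → w t j = -r := by
    intro t ht; rw [hw, bsign, if_neg (not_le.mpr ht), hrdef]; ring
  constructor
  · apply Set.infinite_of_forall_exists_gt
    intro a
    obtain ⟨t, ht, h0⟩ := hA (a + 1)
    exact ⟨t, hwp t h0, by omega⟩
  · apply Set.infinite_of_forall_exists_gt
    intro a
    obtain ⟨t, ht, h0⟩ := hB (a + 1)
    exact ⟨t, hwn t h0, by omega⟩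
end

section
/- Consider the binary QUANT iteration with unit teacher vector w* ∈ ℝⁿ. If there exists j with |w*_j| ≠ 1/√n (equivalently, w* is not a nonnegative multiple of any vector in {−1,1}ⁿ), then the sequence (w^t)_{t≥0} does not converge: there is no L ∈ ℝⁿ with w^t → L as t → ∞. -/
open Real Filter

/-- Binary QUANT iteration: if some coordinate of the unit teacher vector satisfies
`|w*_j| ≠ 1/√n` (i.e. `w*` is not a quantized state), the quantized iterates do not
converge. -/
theorem stmt6 (n m : ℕ) (hn : 1 ≤ n)
    (wstar : Fin n → ℝ) (hws : euclNorm wstar = 1)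
    (v : Fin m → ℝ) (hv : v ≠ 0)
    (c : ℝ) (hc : c = euclNorm v ^ 2 / (2 * Real.sqrt (2 * π)))
    (η : ℕ → ℝ) (ηbar : ℝ) (hη0 : ∀ t, 0 < η t) (hηb : ∀ t, η t ≤ ηbar)
    (hηsum : Tendsto (fun T => ∑ t ∈ Finset.range T, η t) atTop atTop)
    (y w : ℕ → Fin n → ℝ)
    (hw : ∀ t i, w t i = 1 / Real.sqrt n * bsign (y t i))
    (hy : ∀ t i, y (t + 1) i = y t i + η t * c * (wstar i - w t i))
    (hnotq : ∃ j, |wstar j| ≠ 1 / Real.sqrt n) :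
    ¬ ∃ L : Fin n → ℝ, Tendsto w atTop (nhds L) := by
  rintro ⟨L, hL⟩
  have hn0 : (0:ℝ) < n := by exact_mod_cast hn
  have hsn : (0:ℝ) < Real.sqrt n := Real.sqrt_pos.mpr hn0
  set a : ℝ := 1 / Real.sqrt n with hadef
  have ha : 0 < a := by positivity
  -- sum of squares equals 1
  have h0 : 0 ≤ ∑ i, wstar i ^ 2 := Finset.sum_nonneg fun i _ => sq_nonneg _
  have hsum1 : ∑ i, wstar i ^ 2 = 1 := by
    have hws' : Real.sqrt (∑ i, wstar i ^ 2) = 1 := hws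
    nlinarith [Real.sq_sqrt h0]
  -- c > 0
  have hc0 : 0 < c := by
    have hv2 : 0 < ∑ i, v i ^ 2 := by
      obtain ⟨i, hi⟩ := Function.ne_iff.mp hv
      exact Finset.sum_pos' (fun j _ => sq_nonneg _)
        ⟨i, Finset.mem_univ i, by simp only [Pi.zero_apply] at hi; positivity⟩
    have hev : 0 < euclNorm v := Real.sqrt_pos.mpr hv2
    have hpi : 0 < Real.sqrt (2 * π) := Real.sqrt_pos.mpr (by positivity)
    rw [hc]
    exact div_pos (pow_pos hev 2) (by positivity)
  -- there is a coordinate with square strictly below 1/n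
  obtain ⟨k, hk⟩ : ∃ k, wstar k ^ 2 < 1 / n := by
    by_contra h
    push_neg at h
    obtain ⟨j, hj⟩ := hnotq
    have hj2 : wstar j ^ 2 ≠ 1 / n := by
      intro he
      apply hj
      have h1 : |wstar j| = Real.sqrt (1 / n) := by
        rw [← he, Real.sqrt_sq_eq_abs]
      rw [h1, one_div, Real.sqrt_inv, hadef, one_div]
    have hjlt : 1 / (n:ℝ) < wstar j ^ 2 := lt_of_le_of_ne (h j) (Ne.symm hj2)
    have hlt : (1:ℝ) < ∑ i, wstar i ^ 2 := by
      have hone : (1:ℝ) = ∑ _i : Fin n, (1 / n : ℝ) := by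
        rw [Finset.sum_const, Finset.card_univ, Fintype.card_fin, nsmul_eq_mul]
        field_simp
      rw [hone]
      exact Finset.sum_lt_sum (fun i _ => h i) ⟨j, Finset.mem_univ j, hjlt⟩
    linarith
  have hkabs : |wstar k| < a := by
    have h1 : Real.sqrt (wstar k ^ 2) < Real.sqrt (1 / n) :=
      Real.sqrt_lt_sqrt (sq_nonneg _) hk
    rw [Real.sqrt_sq_eq_abs] at h1
    rw [one_div, Real.sqrt_inv, ← one_div] at h1
    exact h1
  have hklt : wstar k < a := lt_of_le_of_lt (le_abs_self _) hkabs
  have hkgt : -a < wstar k := by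
    have := neg_abs_le (wstar k); linarith [neg_lt_neg hkabs]
  -- each w t k is a or -a
  have hwval : ∀ t, w t k = a ∨ w t k = -a := by
    intro t
    rw [hw]
    unfold bsign
    split
    · left; rw [hadef]; ring
    · right; rw [hadef]; ring
  -- convergence at coordinate k and eventual constancy
  have hLk : Tendsto (fun t => w t k) atTop (nhds (L k)) := tendsto_pi_nhds.mp hL k
  obtain ⟨N, hN⟩ := Metric.tendsto_atTop.mp hLk a ha
  have hconst : ∀ t, N ≤ t → w t k = w N k := by
    intro t ht
    have h1 := hN t ht
    have h2 := hN N le_rfl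
    rw [Real.dist_eq, abs_lt] at h1 h2
    rcases hwval t with h | h <;> rcases hwval N with h' | h' <;>
      rw [h] at h1 <;> rw [h'] at h2 <;> rw [h, h'] <;>
      first | rfl | (exfalso; linarith)
  -- closed form for y along coordinate k
  have key : ∀ u, y (N + u) k =
      y N k + c * (wstar k - w N k) * ∑ s ∈ Finset.range u, η (N + s) := by
    intro u
    induction u with
    | zero => simp
    | succ u ih =>
      have h1 : N + (u + 1) = (N + u) + 1 := by omega
      rw [h1, hy, hconst (N + u) (Nat.le_add_right N u), Finset.sum_range_succ, ih]
      ring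
  -- partial sums of shifted η tend to infinity
  have hS : Tendsto (fun u => ∑ s ∈ Finset.range u, η (N + s)) atTop atTop := by
    have h2 : ∀ u, ∑ s ∈ Finset.range u, η (N + s) =
        (∑ t ∈ Finset.range (N + u), η t) + -(∑ t ∈ Finset.range N, η t) := by
      intro u; rw [Finset.sum_range_add]; ring
    simp only [h2]
    apply tendsto_atTop_add_const_right
    exact hηsum.comp (tendsto_atTop_mono (fun u => Nat.le_add_left u N) tendsto_id)
  -- case analysis on the eventual value of w at coordinate k
  rcases hwval N with hWN | hWN
  · -- w N k = a : drift is negative, y → -∞, contradiction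
    have hd : c * (wstar k - w N k) < 0 := by
      rw [hWN]; exact mul_neg_of_pos_of_neg hc0 (by linarith)
    have hyB : Tendsto (fun u => y (N + u) k) atTop atBot := by
      simp only [key]
      exact tendsto_atBot_add_const_left _ _ (hS.const_mul_atTop_of_neg hd)
    obtain ⟨u, hu⟩ := (hyB.eventually (eventually_lt_atBot (0:ℝ))).exists
    have hneg : w (N + u) k = -a := by
      rw [hw]
      unfold bsign
      rw [if_neg (not_le.mpr hu), hadef]; ring
    have := hconst (N + u) (Nat.le_add_right N u)
    rw [hneg, hWN] at this
    linarith
  · -- w N k = -a : drift is positive, y → ∞, contradiction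
    have hd : 0 < c * (wstar k - w N k) := by
      rw [hWN]; exact mul_pos hc0 (by linarith)
    have hyT : Tendsto (fun u => y (N + u) k) atTop atTop := by
      simp only [key]
      exact tendsto_atTop_add_const_left _ _ (hS.const_mul_atTop hd)
    obtain ⟨u, hu⟩ := (hyT.eventually (eventually_gt_atTop (0:ℝ))).exists
    have hpos : w (N + u) k = a := by
      rw [hw]
      unfold bsign
      rw [if_pos hu.le, hadef]; ring
    have := hconst (N + u) (Nat.le_add_right N u)
    rw [hpos, hWN] at this
    linarith
end

section
/- Let n = 4 and w* = (1/6, 1/6, 1/6, (1/2)·√(11/3)) ∈ ℝ⁴ (a unit vector). Fix a nonzero v ∈ ℝᵐ, set c = ‖v‖²/(2√(2π)), take a constant learning rate η_t = η > 0 for all t, and set λ = η·‖v‖²/(6·√(2π)). Suppose the initialization y⁰ ∈ ℝ⁴ satisfies y⁰_1 ∈ (−λ, 0), y⁰_2 ∈ (0, λ), y⁰_3 ∈ (λ, 2λ), and y⁰_4 ∈ (0, ∞). Then the binary QUANT iterates satisfy w^{t+3} = w^t for all t ≥ 0, and w^t ≠ (1/2, 1/2, 1/2, 1/2) for all t ≥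 0; in particular, the sequence (w^t) is periodic with period 3 and never equals the normalized binary quantization of w*. -/
open Real Set

/-- Explicit example of oscillatory divergence: for `w* = (1/6, 1/6, 1/6, (1/2)√(11/3))`,
constant learning rate `η`, and suitable initialization, the binary QUANT iterates are
periodic with period 3 and never equal the optimum `(1/2, 1/2, 1/2, 1/2)`. -/
theorem stmt7 (m : ℕ) (v : Fin m → ℝ) (hv : v ≠ 0)
    (wstar : Fin 4 → ℝ)
    (hws : wstar = ![1 / 6, 1 / 6, 1 / 6, 1 / 2 * Real.sqrt (11 / 3)])
    (c : ℝ) (hc : c = euclNorm v ^ 2 / (2 * Real.sqrt (2 * π)))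
    (η : ℝ) (hη : 0 < η)
    (lam : ℝ) (hlam : lam = η * euclNorm v ^ 2 / (6 * Real.sqrt (2 * π)))
    (y w : ℕ → Fin 4 → ℝ)
    (hw : ∀ t i, w t i = 1 / Real.sqrt 4 * bsign (y t i))
    (hy : ∀ t i, y (t + 1) i = y t i + η * c * (wstar i - w t i))
    (h0 : y 0 0 ∈ Ioo (-lam) 0) (h1 : y 0 1 ∈ Ioo 0 lam)
    (h2 : y 0 2 ∈ Ioo lam (2 * lam)) (h3 : y 0 3 ∈ Ioi (0 : ℝ)) :
    (∀ t, w (t + 3) = w t) ∧ ∀ t, w t ≠ ![1 / 2, 1 / 2, 1 / 2, 1 / 2] := by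
  have h4 : Real.sqrt 4 = 2 := by
    rw [show (4 : ℝ) = 2 ^ 2 by norm_num, Real.sqrt_sq (by norm_num)]
  -- positivity facts
  have hvpos : 0 < euclNorm v := by
    obtain ⟨i, hi⟩ := Function.ne_iff.mp hv
    have hsum : 0 < ∑ j, v j ^ 2 := by
      apply Finset.sum_pos' (fun j _ => sq_nonneg _)
      exact ⟨i, Finset.mem_univ i, pow_two_pos_of_ne_zero hi⟩
    exact Real.sqrt_pos.mpr hsum
  have hspos : 0 < Real.sqrt (2 * π) := Real.sqrt_pos.mpr (by positivity)
  have hlampos : 0 < lam := by rw [hlam]; positivity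
  have hec : η * c = 3 * lam := by
    rw [hc, hlam]; field_simp; ring
  -- sign computation for w
  have hwval : ∀ t i, (0 ≤ y t i → w t i = 1 / 2) ∧ (y t i < 0 → w t i = -(1 / 2)) := by
    intro t i
    constructor <;> intro h <;> rw [hw, h4, bsign]
    · rw [if_pos h]; ring
    · rw [if_neg (not_le.mpr h)]; ring
  -- update rule for coordinates 0,1,2
  have upd : ∀ t (i : Fin 4), wstar i = 1 / 6 →
      (0 ≤ y t i → y (t + 1) i = y t i - lam) ∧ (y t i < 0 → y (t + 1) i = y t i + 2 * lam) := by
    intro t i hwi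
    constructor <;> intro h <;> rw [hy, hwi]
    · rw [(hwval t i).1 h]; nlinarith [hec]
    · rw [(hwval t i).2 h]; nlinarith [hec]
  have hw0 : wstar 0 = 1 / 6 := by rw [hws]; rfl
  have hw1 : wstar 1 = 1 / 6 := by rw [hws]; rfl
  have hw2 : wstar 2 = 1 / 6 := by rw [hws]; rfl
  have hw3 : 1 / 2 < wstar 3 := by
    rw [hws]
    show (1 : ℝ) / 2 < 1 / 2 * Real.sqrt (11 / 3)
    have : (1 : ℝ) < Real.sqrt (11 / 3) := by
      have := Real.sqrt_lt_sqrt (by norm_num : (0:ℝ) ≤ 1) (by norm_num : (1:ℝ) < 11 / 3)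
      rwa [Real.sqrt_one] at this
    nlinarith
  -- coordinate 3 stays positive
  have upd3 : ∀ t, 0 < y t 3 → 0 < y (t + 1) 3 := by
    intro t h
    rw [hy, (hwval t 3).1 h.le]
    nlinarith [hec]
  -- the three states
  set A : ℕ → Prop := fun t => y t 0 ∈ Ioo (-lam) 0 ∧ y t 1 ∈ Ioo 0 lam ∧
    y t 2 ∈ Ioo lam (2 * lam) ∧ 0 < y t 3 with hA
  set B : ℕ → Prop := fun t => y t 0 ∈ Ioo lam (2 * lam) ∧ y t 1 ∈ Ioo (-lam) 0 ∧
    y t 2 ∈ Ioo 0 lam ∧ 0 < y t 3 with hB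
  set C : ℕ → Prop := fun t => y t 0 ∈ Ioo 0 lam ∧ y t 1 ∈ Ioo lam (2 * lam) ∧
    y t 2 ∈ Ioo (-lam) 0 ∧ 0 < y t 3 with hC
  have hAB : ∀ t, A t → B (t + 1) := by
    intro t ⟨a0, a1, a2, a3⟩
    refine ⟨?_, ?_, ?_, upd3 t a3⟩
    · rw [(upd t 0 hw0).2 a0.2]; constructor <;> [linarith [a0.1]; linarith [a0.2]]
    · rw [(upd t 1 hw1).1 a1.1.le]; constructor <;> [linarith [a1.1]; linarith [a1.2]]
    · rw [(upd t 2 hw2).1 (by linarith [a2.1] : (0:ℝ) ≤ y t 2)]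
      constructor <;> [linarith [a2.1]; linarith [a2.2]]
  have hBC : ∀ t, B t → C (t + 1) := by
    intro t ⟨a0, a1, a2, a3⟩
    refine ⟨?_, ?_, ?_, upd3 t a3⟩
    · rw [(upd t 0 hw0).1 (by linarith [a0.1] : (0:ℝ) ≤ y t 0)]
      constructor <;> [linarith [a0.1]; linarith [a0.2]]
    · rw [(upd t 1 hw1).2 a1.2]; constructor <;> [linarith [a1.1]; linarith [a1.2]]
    · rw [(upd t 2 hw2).1 a2.1.le]; constructor <;> [linarith [a2.1]; linarith [a2.2]]
  have hCA : ∀ t, C t → A (t + 1) := by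
    intro t ⟨a0, a1, a2, a3⟩
    refine ⟨?_, ?_, ?_, upd3 t a3⟩
    · rw [(upd t 0 hw0).1 a0.1.le]; constructor <;> [linarith [a0.1]; linarith [a0.2]]
    · rw [(upd t 1 hw1).1 (by linarith [a1.1] : (0:ℝ) ≤ y t 1)]
      constructor <;> [linarith [a1.1]; linarith [a1.2]]
    · rw [(upd t 2 hw2).2 a2.2]; constructor <;> [linarith [a2.1]; linarith [a2.2]]
  have hInv : ∀ t, A t ∨ B t ∨ C t := by
    intro t
    induction t with
    | zero => exact Or.inl ⟨h0, h1, h2, h3⟩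
    | succ n ih =>
      rcases ih with h | h | h
      · exact Or.inr (Or.inl (hAB n h))
      · exact Or.inr (Or.inr (hBC n h))
      · exact Or.inl (hCA n h)
  -- w values in each state
  have wA : ∀ t, A t → w t = ![-(1/2), 1/2, 1/2, 1/2] := by
    intro t ⟨a0, a1, a2, a3⟩
    funext i
    fin_cases i
    · exact (hwval t 0).2 a0.2
    · exact (hwval t 1).1 a1.1.le
    · exact (hwval t 2).1 (by linarith [a2.1])
    · exact (hwval t 3).1 a3.le
  have wB : ∀ t, B t → w t = ![1/2, -(1/2), 1/2, 1/2] := by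
    intro t ⟨a0, a1, a2, a3⟩
    funext i
    fin_cases i
    · exact (hwval t 0).1 (by linarith [a0.1])
    · exact (hwval t 1).2 a1.2
    · exact (hwval t 2).1 a2.1.le
    · exact (hwval t 3).1 a3.le
  have wC : ∀ t, C t → w t = ![1/2, 1/2, -(1/2), 1/2] := by
    intro t ⟨a0, a1, a2, a3⟩
    funext i
    fin_cases i
    · exact (hwval t 0).1 a0.1.le
    · exact (hwval t 1).1 (by linarith [a1.1])
    · exact (hwval t 2).2 a2.2
    · exact (hwval t 3).1 a3.le
  constructor
  · intro t
    rcases hInv t with h | h | h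
    · rw [wA _ (hCA _ (hBC _ (hAB _ h))), wA _ h]
    · rw [wB _ (hAB _ (hCA _ (hBC _ h))), wB _ h]
    · rw [wC _ (hBC _ (hAB _ (hCA _ h))), wC _ h]
  · intro t heq
    rcases hInv t with h | h | h
    · have := congrFun ((wA t h).symm.trans heq) 0
      simp at this; norm_num at this
    · have := congrFun ((wB t h).symm.trans heq) 1
      simp at this; norm_num at this
    · have := congrFun ((wC t h).symm.trans heq) 2
      simp at this; norm_num at this
end

section
/- Consider the binary QUANT iteration with unit teacher vector w* ∈ ℝⁿ, and let ŵ = (1/√n)·s̄(w*). If 0 < ∑_{j : |w*_j| < 1/√n} |w*_j − ŵ_j| < 2/√n, then for any initialization y⁰ ∈ ℝⁿ there are infinitely many t with w^t = ŵ; that is, the global optimum ŵ is visited infinitely often. -/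
open Real Filter

lemma bsign_of_nonneg {a : ℝ} (h : 0 ≤ a) : bsign a = 1 := if_pos h
lemma bsign_of_neg {a : ℝ} (h : a < 0) : bsign a = -1 := if_neg (not_le.mpr h)

lemma bsign_cases (a : ℝ) : bsign a = 1 ∨ bsign a = -1 := by
  unfold bsign; split <;> simp

lemma bsign_mul_self (a : ℝ) : bsign a * a = |a| := by
  rcases le_or_gt 0 a with h | h
  · rw [bsign_of_nonneg h, one_mul, abs_of_nonneg h]
  · rw [bsign_of_neg h, abs_of_neg h]; ring

lemma lock_nonneg (η : ℕ → ℝ) (hη0 : ∀ t, 0 < η t)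
    (hsum : Tendsto (fun T => ∑ t ∈ Finset.range T, η t) atTop atTop)
    (K K' : ℝ) (hK : 0 < K) (hK' : 0 ≤ K')
    (u : ℕ → ℝ)
    (h1 : ∀ t, 0 ≤ u t → u (t + 1) = u t + η t * K')
    (h2 : ∀ t, u t < 0 → u (t + 1) = u t + η t * K) :
    ∃ T, ∀ t, T ≤ t → 0 ≤ u t := by
  have hstart : ∃ T, 0 ≤ u T := by
    by_contra h
    push_neg at h
    have hform : ∀ t, u t = u 0 + K * ∑ s ∈ Finset.range t, η s := by
      intro t
      induction t with
      | zero => simp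
      | succ t ih => rw [h2 t (h t), ih, Finset.sum_range_succ]; ring
    have htt : Tendsto u atTop atTop := by
      have h' : Tendsto (fun t => u 0 + K * ∑ s ∈ Finset.range t, η s) atTop atTop :=
        tendsto_atTop_add_const_left _ _ (hsum.const_mul_atTop hK)
      exact h'.congr fun t => (hform t).symm
    obtain ⟨t, ht⟩ := (htt.eventually_gt_atTop 0).exists
    exact absurd ht (not_lt.mpr (h t).le)
  obtain ⟨T, hT⟩ := hstart
  refine ⟨T, fun t ht => ?_⟩
  obtain ⟨k, rfl⟩ := Nat.exists_eq_add_of_le ht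
  clear ht
  induction k with
  | zero => exact hT
  | succ k ih =>
    rw [← Nat.add_assoc, h1 _ ih]
    have := (hη0 (T + k)).le
    nlinarith

lemma lock_neg (η : ℕ → ℝ) (hη0 : ∀ t, 0 < η t)
    (hsum : Tendsto (fun T => ∑ t ∈ Finset.range T, η t) atTop atTop)
    (K K' : ℝ) (hK : 0 < K) (hK' : K' ≤ 0)
    (u : ℕ → ℝ)
    (h1 : ∀ t, 0 ≤ u t → u (t + 1) = u t - η t * K)
    (h2 : ∀ t, u t < 0 → u (t + 1) = u t + η t * K') :
    ∃ T, ∀ t, T ≤ t → u t < 0 := by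
  have hstart : ∃ T, u T < 0 := by
    by_contra h
    push_neg at h
    have hform : ∀ t, -u t = -u 0 + K * ∑ s ∈ Finset.range t, η s := by
      intro t
      induction t with
      | zero => simp
      | succ t ih => rw [h1 t (h t), Finset.sum_range_succ]; linear_combination ih
    have htt : Tendsto (fun t => -u t) atTop atTop := by
      have h' : Tendsto (fun t => -u 0 + K * ∑ s ∈ Finset.range t, η s) atTop atTop :=
        tendsto_atTop_add_const_left _ _ (hsum.const_mul_atTop hK)
      exact h'.congr fun t => (hform t).symm
    obtain ⟨t, ht⟩ := (htt.eventually_gt_atTop 0).exists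
    have : u t < 0 := by linarith
    exact absurd this (not_lt.mpr (h t))
  obtain ⟨T, hT⟩ := hstart
  refine ⟨T, fun t ht => ?_⟩
  obtain ⟨k, rfl⟩ := Nat.exists_eq_add_of_le ht
  clear ht
  induction k with
  | zero => exact hT
  | succ k ih =>
    rw [← Nat.add_assoc, h2 _ ih]
    have := (hη0 (T + k)).le
    nlinarith

lemma bad_abs_bound (η : ℕ → ℝ) (ηbar c r W : ℝ)
    (hη0 : ∀ t, 0 < η t) (hηb : ∀ t, η t ≤ ηbar)
    (hc : 0 < c) (hr : 0 < r) (hW : |W| < r)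
    (u : ℕ → ℝ)
    (hu : ∀ t, u (t + 1) = u t + η t * c * (W - r * bsign (u t))) :
    ∀ t, |u t| ≤ max |u 0| (ηbar * c * (2 * r)) := by
  intro t
  induction t with
  | zero => exact le_max_left _ _
  | succ t ih =>
    have hWr := abs_lt.mp hW
    have hηt := hη0 t
    have hηbt := hηb t
    have hM0 : |u 0| ≤ max |u 0| (ηbar * c * (2 * r)) := le_max_left _ _
    have hM1 : ηbar * c * (2 * r) ≤ max |u 0| (ηbar * c * (2 * r)) := le_max_right _ _
    have hab := abs_le.mp ih
    have h3 : η t * c * (r - W) ≤ ηbar * c * (2 * r) := by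
      nlinarith [mul_nonneg (mul_nonneg (sub_nonneg.mpr hηbt) hc.le)
          (by linarith [hWr.2] : (0:ℝ) ≤ r - W),
        mul_nonneg (mul_nonneg hηt.le hc.le) (by linarith [hWr.1] : (0:ℝ) ≤ r + W)]
    have h6 : η t * c * (W + r) ≤ ηbar * c * (2 * r) := by
      nlinarith [mul_nonneg (mul_nonneg (sub_nonneg.mpr hηbt) hc.le)
          (by linarith [hWr.1] : (0:ℝ) ≤ W + r),
        mul_nonneg (mul_nonneg hηt.le hc.le) (by linarith [hWr.2] : (0:ℝ) ≤ r - W)]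
    have h4 : 0 ≤ η t * c * (r - W) :=
      mul_nonneg (mul_nonneg hηt.le hc.le) (by linarith [hWr.2])
    have h5 : 0 ≤ η t * c * (W + r) :=
      mul_nonneg (mul_nonneg hηt.le hc.le) (by linarith [hWr.1])
    rcases le_or_gt 0 (u t) with h | h
    · rw [hu t, bsign_of_nonneg h, abs_le]
      constructor
      · nlinarith [h3, hM1]
      · nlinarith [h4, hab.2]
    · rw [hu t, bsign_of_neg h, abs_le]
      constructor
      · nlinarith [h5, hab.1]
      · nlinarith [h6, hM1]

set_option maxHeartbeats 2000000 in
/-- Binary-case recurrence theorem: if the normalized binary quantization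
`ŵ = (1/√n)·s̄(w*)` of the unit teacher vector satisfies
`0 < ∑_{j : |w*_j| < 1/√n} |w*_j − ŵ_j| < 2/√n`, then the binary QUANT iterates
visit `ŵ` infinitely often, from any initialization. -/
theorem stmt8 (n m : ℕ) (hn : 1 ≤ n)
    (wstar : Fin n → ℝ) (hws : euclNorm wstar = 1)
    (v : Fin m → ℝ) (hv : v ≠ 0)
    (c : ℝ) (hc : c = euclNorm v ^ 2 / (2 * Real.sqrt (2 * π)))
    (η : ℕ → ℝ) (ηbar : ℝ) (hη0 : ∀ t, 0 < η t) (hηb : ∀ t, η t ≤ ηbar)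
    (hηsum : Tendsto (fun T => ∑ t ∈ Finset.range T, η t) atTop atTop)
    (y w : ℕ → Fin n → ℝ)
    (hw : ∀ t i, w t i = 1 / Real.sqrt n * bsign (y t i))
    (hy : ∀ t i, y (t + 1) i = y t i + η t * c * (wstar i - w t i))
    (what : Fin n → ℝ) (hwhat : ∀ i, what i = 1 / Real.sqrt n * bsign (wstar i))
    (hlo : 0 < ∑ j ∈ Finset.univ.filter (fun j => |wstar j| < 1 / Real.sqrt n),
      |wstar j - what j|)
    (hhi : (∑ j ∈ Finset.univ.filter (fun j => |wstar j| < 1 / Real.sqrt n),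
      |wstar j - what j|) < 2 / Real.sqrt n) :
    {t | w t = what}.Infinite := by
  -- basic positivity
  set r : ℝ := 1 / Real.sqrt n with hrdef
  have hn' : (0:ℝ) < n := by exact_mod_cast Nat.lt_of_lt_of_le Nat.zero_lt_one hn
  have hsn : 0 < Real.sqrt n := Real.sqrt_pos.mpr hn'
  have hr : 0 < r := by rw [hrdef]; exact div_pos one_pos hsn
  have hcpos : 0 < c := by
    obtain ⟨i, hi⟩ := Function.ne_iff.mp hv
    have hsum : 0 < ∑ i, v i ^ 2 := by
      apply Finset.sum_pos' (fun j _ => sq_nonneg _) ⟨i, Finset.mem_univ i, lt_of_le_of_ne (sq_nonneg _) (Ne.symm (pow_ne_zero 2 hi))⟩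
    rw [hc]
    unfold euclNorm
    rw [Real.sq_sqrt hsum.le]
    have hπ : (0:ℝ) < Real.sqrt (2 * π) := Real.sqrt_pos.mpr (by positivity)
    exact div_pos hsum (by linarith)
  -- the bad set
  set B : Finset (Fin n) := Finset.univ.filter (fun j => |wstar j| < r) with hBdef
  -- sign lock on good coordinates
  have hlock : ∀ i : Fin n, r ≤ |wstar i| → ∃ T, ∀ t, T ≤ t → w t i = what i := by
    intro i hi
    rcases le_or_gt 0 (wstar i) with hpos | hneg
    · have hwi : r ≤ wstar i := by rwa [abs_of_nonneg hpos] at hi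
      obtain ⟨T, hT⟩ := lock_nonneg η hη0 hηsum (c * (wstar i + r)) (c * (wstar i - r))
        (by nlinarith) (by nlinarith) (fun t => y t i)
        (fun t ht => by
          show y (t + 1) i = y t i + η t * (c * (wstar i - r))
          rw [hy t i, hw t i, bsign_of_nonneg ht]; ring)
        (fun t ht => by
          show y (t + 1) i = y t i + η t * (c * (wstar i + r))
          rw [hy t i, hw t i, bsign_of_neg ht]; ring)
      exact ⟨T, fun t ht => by
        rw [hw t i, hwhat i, bsign_of_nonneg (hT t ht), bsign_of_nonneg hpos]⟩
    · have hwi : wstar i ≤ -r := by rw [abs_of_neg hneg] at hi; linarith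
      obtain ⟨T, hT⟩ := lock_neg η hη0 hηsum (c * (r - wstar i)) (c * (wstar i + r))
        (by nlinarith) (by nlinarith) (fun t => y t i)
        (fun t ht => by
          show y (t + 1) i = y t i - η t * (c * (r - wstar i))
          rw [hy t i, hw t i, bsign_of_nonneg ht]; ring)
        (fun t ht => by
          show y (t + 1) i = y t i + η t * (c * (wstar i + r))
          rw [hy t i, hw t i, bsign_of_neg ht]; ring)
      exact ⟨T, fun t ht => by
        rw [hw t i, hwhat i, bsign_of_neg (hT t ht), bsign_of_neg hneg]⟩
  have hgood : ∃ N, ∀ t, N ≤ t → ∀ i : Fin n, r ≤ |wstar i| → w t i = what i := by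
    have hchoice : ∀ i : Fin n, ∃ T : ℕ, r ≤ |wstar i| → ∀ t, T ≤ t → w t i = what i := by
      intro i
      by_cases h : r ≤ |wstar i|
      · obtain ⟨T, hT⟩ := hlock i h; exact ⟨T, fun _ => hT⟩
      · exact ⟨0, fun h' => absurd h' h⟩
    choose T hT using hchoice
    exact ⟨Finset.univ.sup T, fun t ht i hi =>
      hT i hi t (le_trans (Finset.le_sup (Finset.mem_univ i)) ht)⟩
  obtain ⟨N, hN⟩ := hgood
  -- |wstar j - what j| = r - |wstar j| on B
  have habs : ∀ j ∈ B, |wstar j - what j| = r - |wstar j| := by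
    intro j hj
    have hj' : |wstar j| < r := by
      rw [hBdef] at hj; exact (Finset.mem_filter.mp hj).2
    have hj2 := abs_lt.mp hj'
    rw [hwhat j]
    rcases le_or_gt 0 (wstar j) with h | h
    · rw [bsign_of_nonneg h, abs_of_nonneg h, mul_one, abs_of_nonpos (by linarith)]
      ring
    · rw [bsign_of_neg h, abs_of_neg h, mul_neg_one, abs_of_nonneg (by linarith)]
      ring
  -- δ
  set Sg : ℝ := ∑ j ∈ B, |wstar j - what j| with hSgdef
  set δ : ℝ := 2 * r - Sg with hδdef
  have h2r : 2 / Real.sqrt n = 2 * r := by rw [hrdef]; ring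
  have hδpos : 0 < δ := by
    rw [hδdef]
    have := hhi
    rw [h2r] at this
    linarith [this]
  -- increment lower bound when wrong somewhere on B
  have hinc : ∀ t, (∃ j ∈ B, bsign (y t j) ≠ bsign (wstar j)) →
      δ ≤ ∑ j ∈ B, bsign (wstar j) * (wstar j - w t j) := by
    intro t ⟨j0, hj0B, hj0⟩
    have hterm : ∀ j ∈ B, bsign (wstar j) * (wstar j - w t j) + |wstar j - what j|
        = r * (1 - bsign (wstar j) * bsign (y t j)) := by
      intro j hj
      rw [hw t j, habs j hj]
      linear_combination bsign_mul_self (wstar j)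
    have hsum2 : ∑ j ∈ B, (bsign (wstar j) * (wstar j - w t j) + |wstar j - what j|)
        = ∑ j ∈ B, r * (1 - bsign (wstar j) * bsign (y t j)) :=
      Finset.sum_congr rfl hterm
    have h0 : ∀ j ∈ B, 0 ≤ r * (1 - bsign (wstar j) * bsign (y t j)) := by
      intro j _
      rcases bsign_cases (wstar j) with h1 | h1 <;> rcases bsign_cases (y t j) with h2 | h2 <;>
        rw [h1, h2] <;> nlinarith
    have hj0' : 2 * r ≤ r * (1 - bsign (wstar j0) * bsign (y t j0)) := by
      have hprod : bsign (wstar j0) * bsign (y t j0) = -1 := by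
        rcases bsign_cases (wstar j0) with h1 | h1 <;>
          rcases bsign_cases (y t j0) with h2 | h2 <;> rw [h1, h2]
        · exact absurd (h2.trans h1.symm) hj0
        · ring
        · ring
        · exact absurd (h2.trans h1.symm) hj0
      rw [hprod]; ring_nf; linarith
    have hge : 2 * r ≤ ∑ j ∈ B, r * (1 - bsign (wstar j) * bsign (y t j)) :=
      le_trans hj0' (Finset.single_le_sum h0 hj0B)
    have hsplit : ∑ j ∈ B, (bsign (wstar j) * (wstar j - w t j) + |wstar j - what j|)
        = (∑ j ∈ B, bsign (wstar j) * (wstar j - w t j)) + Sg := by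
      rw [Finset.sum_add_distrib]
    rw [hδdef]
    linarith [hsplit ▸ hsum2 ▸ hge, hge, hsplit, hsum2]
  -- bound on the potential
  set Y : ℕ → ℝ := fun t => ∑ j ∈ B, bsign (wstar j) * y t j with hYdef
  set M : ℝ := ∑ j ∈ B, max |y 0 j| (ηbar * c * (2 * r)) with hMdef
  have hYbound : ∀ t, Y t ≤ M := by
    intro t
    rw [hYdef, hMdef]
    apply Finset.sum_le_sum
    intro j hj
    have hj' : |wstar j| < r := by rw [hBdef] at hj; exact (Finset.mem_filter.mp hj).2
    have hb := bad_abs_bound η ηbar c r (wstar j) hη0 hηb hcpos hr hj' (fun t => y t j)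
      (fun t => by
        show y (t + 1) j = y t j + η t * c * (wstar j - r * bsign (y t j))
        rw [hy t j, hw t j]) t
    have : bsign (wstar j) * y t j ≤ |y t j| := by
      rcases bsign_cases (wstar j) with h1 | h1 <;> rw [h1]
      · rw [one_mul]; exact le_abs_self _
      · rw [neg_one_mul]; exact neg_le_abs _
    exact le_trans this hb
  -- Y recurrence
  have hYrec : ∀ t, Y (t + 1) = Y t + η t * c * ∑ j ∈ B, bsign (wstar j) * (wstar j - w t j) := by
    intro t
    rw [hYdef]
    simp only
    rw [Finset.mul_sum, ← Finset.sum_add_distrib]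
    apply Finset.sum_congr rfl
    intro j _
    rw [hy t j]
    ring
  -- main
  apply Set.infinite_of_forall_exists_gt
  intro a
  by_contra hcon
  push_neg at hcon
  -- so for all t > a, w t ≠ what
  set T : ℕ := max (a + 1) N with hTdef
  have hbad : ∀ t, T ≤ t → ∃ j ∈ B, bsign (y t j) ≠ bsign (wstar j) := by
    intro t ht
    have hta : a < t := lt_of_lt_of_le (Nat.lt_succ_self a) (le_trans (le_max_left _ _) ht)
    have hne : w t ≠ what := fun heq => absurd hta (not_lt.mpr (hcon t heq))
    obtain ⟨j, hj⟩ := Function.ne_iff.mp hne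
    have hjB : j ∈ B := by
      rw [hBdef, Finset.mem_filter]
      refine ⟨Finset.mem_univ j, ?_⟩
      by_contra hjg
      exact hj (hN t (le_trans (le_max_right _ _) ht) j (not_lt.mp hjg))
    refine ⟨j, hjB, fun hs => hj ?_⟩
    rw [hw t j, hwhat j, hs]
  -- telescoping
  set S : ℕ → ℝ := fun t => ∑ s ∈ Finset.range t, η s with hSdef
  have htel : ∀ t, T ≤ t → Y T + (c * δ) * (S t - S T) ≤ Y t := by
    intro t ht
    induction t, ht using Nat.le_induction with
    | base => simp
    | succ t ht ih =>
      have hA := hinc t (hbad t ht)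
      have hstep : Y t + η t * (c * δ) ≤ Y (t + 1) := by
        rw [hYrec t]
        have := mul_le_mul_of_nonneg_left hA (mul_nonneg (hη0 t).le hcpos.le)
        nlinarith [this]
      have hS : S (t + 1) = S t + η t := by rw [hSdef]; exact Finset.sum_range_succ _ _
      rw [hS]
      nlinarith [ih, hstep, mul_pos hcpos hδpos, (hη0 t).le,
        mul_le_mul_of_nonneg_left (le_refl (η t)) (mul_pos hcpos hδpos).le]
  -- contradiction via unboundedness
  have h1 : Tendsto (fun t => S t - S T) atTop atTop := by
    have h2 := tendsto_atTop_add_const_right atTop (-(S T)) hηsum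
    refine h2.congr fun t => ?_
    rw [hSdef]
    ring
  have htt : Tendsto (fun t => Y T + (c * δ) * (S t - S T)) atTop atTop :=
    tendsto_atTop_add_const_left _ _ (h1.const_mul_atTop (mul_pos hcpos hδpos))
  obtain ⟨t, ht1, ht2⟩ := ((htt.eventually_gt_atTop M).and (eventually_ge_atTop T)).exists
  exact absurd (hYbound t) (not_le.mpr (lt_of_lt_of_le ht1 (htel t ht2)))
end

section
/- Consider the ternary QUANT iteration with unit teacher vector w* ∈ ℝⁿ. If w* ∉ Q₃ (i.e., w* is not a nonnegative multiple of any vector in {−1,0,1}ⁿ), then the sequence (w^t)_{t≥0} does not converge: there is no L ∈ ℝⁿ with w^t → L as t → ∞. -/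
open Real Filter Set

/-- `s` is a ternary sign vector, i.e. `s ∈ {−1,0,1}ⁿ`. -/
def IsTern {k : ℕ} (s : Fin k → ℝ) : Prop := ∀ i, s i = -1 ∨ s i = 0 ∨ s i = 1

/-- `x` belongs to the ternary quantized set `Q₃ = {δ·s : δ ≥ 0, s ∈ {−1,0,1}ⁿ}`. -/
def InQ3 {k : ℕ} (x : Fin k → ℝ) : Prop :=
  ∃ δ : ℝ, 0 ≤ δ ∧ ∃ s : Fin k → ℝ, IsTern s ∧ x = δ • s

/-- `u` is a normalized ternary projection of `y`: `u = s/‖s‖` for a nonzero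
ternary sign vector `s` maximizing `⟨y, s'⟩/‖s'‖` over nonzero ternary `s'`. -/
noncomputable def IsNTernProj {k : ℕ} (y u : Fin k → ℝ) : Prop :=
  ∃ s : Fin k → ℝ, IsTern s ∧ s ≠ 0 ∧
    (∀ s' : Fin k → ℝ, IsTern s' → s' ≠ 0 →
      (∑ i, y i * s' i) / euclNorm s' ≤ (∑ i, y i * s i) / euclNorm s) ∧
    u = fun i => s i / euclNorm s

lemma sq_euclNorm {k : ℕ} (x : Fin k → ℝ) : euclNorm x ^ 2 = ∑ i, x i ^ 2 :=
  Real.sq_sqrt (Finset.sum_nonneg fun i _ => sq_nonneg _)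

lemma euclNorm_pos {k : ℕ} {x : Fin k → ℝ} (hx : x ≠ 0) : 0 < euclNorm x := by
  rw [euclNorm, Real.sqrt_pos]
  obtain ⟨i, hi⟩ := Function.ne_iff.mp hx
  exact Finset.sum_pos' (fun j _ => sq_nonneg _)
    ⟨i, Finset.mem_univ _, lt_of_le_of_ne (sq_nonneg _) (Ne.symm (pow_ne_zero 2 hi))⟩

lemma ntern_finite (k : ℕ) :
    {u : Fin k → ℝ | ∃ s, IsTern s ∧ s ≠ 0 ∧ u = fun i => s i / euclNorm s}.Finite := by
  have h1 : ({s : Fin k → ℝ | IsTern s}).Finite := by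
    have hsub : {s : Fin k → ℝ | IsTern s} ⊆
        Set.pi Set.univ (fun _ : Fin k => ({-1, 0, 1} : Set ℝ)) := by
      intro s hs i _
      rcases hs i with h | h | h <;> simp [h]
    exact (Set.Finite.pi fun i =>
      (Set.finite_singleton (1:ℝ)).insert 0 |>.insert (-1)).subset hsub
  have h2 := h1.image (fun s : Fin k → ℝ => fun i => s i / euclNorm s)
  refine h2.subset ?_
  rintro u ⟨s, ht, _, rfl⟩
  exact ⟨s, ht, rfl⟩

/-- normalized ternary vectors have unit sum of squares -/
lemma ntern_sumsq {k : ℕ} {s : Fin k → ℝ} (hs : s ≠ 0) :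
    ∑ i, (s i / euclNorm s) ^ 2 = 1 := by
  have hN : (0:ℝ) < euclNorm s := euclNorm_pos hs
  have : ∑ i, (s i / euclNorm s) ^ 2 = (∑ i, s i ^ 2) / euclNorm s ^ 2 := by
    rw [Finset.sum_div]
    exact Finset.sum_congr rfl fun i _ => by rw [div_pow]
  rw [this, ← sq_euclNorm s, div_self (by positivity)]

/-- Ternary QUANT iteration: if the unit teacher vector `w*` is not in `Q₃`,
the quantized iterates do not converge. -/
theorem stmt9 (n m : ℕ) (hn : 1 ≤ n)
    (wstar : Fin n → ℝ) (hws : euclNorm wstar = 1) (hQ : ¬ InQ3 wstar)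
    (v : Fin m → ℝ) (hv : v ≠ 0)
    (c : ℝ) (hc : c = euclNorm v ^ 2 / (2 * Real.sqrt (2 * π)))
    (η : ℕ → ℝ) (ηbar : ℝ) (hη0 : ∀ t, 0 < η t) (hηb : ∀ t, η t ≤ ηbar)
    (hηsum : Tendsto (fun T => ∑ t ∈ Finset.range T, η t) atTop atTop)
    (y w : ℕ → Fin n → ℝ)
    (hproj : ∀ t, IsNTernProj (y t) (w t))
    (hy : ∀ t i, y (t + 1) i = y t i + η t * c * (wstar i - w t i)) :
    ¬ ∃ L : Fin n → ℝ, Tendsto w atTop (nhds L) := by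
  rintro ⟨L, hL⟩
  have hcpos : 0 < c := by
    have h1 : 0 < euclNorm v := euclNorm_pos hv
    have h2 : 0 < Real.sqrt (2 * π) := Real.sqrt_pos.mpr (by positivity)
    rw [hc]; positivity
  set F := {u : Fin n → ℝ | ∃ s, IsTern s ∧ s ≠ 0 ∧ u = fun i => s i / euclNorm s} with hFdef
  have hFfin : F.Finite := ntern_finite n
  have hwF : ∀ t, w t ∈ F := by
    intro t
    obtain ⟨s, h1, h2, _, h4⟩ := hproj t
    exact ⟨s, h1, h2, h4⟩
  -- the sequence is eventually equal to L
  have hev : ∀ᶠ t in atTop, w t = L := by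
    have hcl : IsClosed (F \ {L}) := (hFfin.subset Set.diff_subset).isClosed
    have hLmem : L ∈ (F \ {L})ᶜ := fun h => h.2 rfl
    filter_upwards [hL.eventually (hcl.isOpen_compl.mem_nhds hLmem)] with t ht
    by_contra hne
    exact ht ⟨hwF t, hne⟩
  obtain ⟨T, hT⟩ := eventually_atTop.mp hev
  have hLF : L ∈ F := hT T le_rfl ▸ hwF T
  obtain ⟨s0, hts0, hns0, hLs0⟩ := hLF
  -- basic facts on L
  have hsumL : ∑ i, L i ^ 2 = 1 := by rw [hLs0]; exact ntern_sumsq hns0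
  have hsumW : ∑ i, wstar i ^ 2 = 1 := by
    have := sq_euclNorm wstar; rw [hws] at this; linarith
  have hLQ3 : InQ3 L := by
    refine ⟨(euclNorm s0)⁻¹, inv_nonneg.mpr (euclNorm_pos hns0).le, s0, hts0, ?_⟩
    rw [hLs0]; funext i; simp [div_eq_inv_mul]
  have hwL : wstar ≠ L := fun h => hQ (h ▸ hLQ3)
  obtain ⟨j, hj⟩ := Function.ne_iff.mp hwL
  set ip := ∑ i, wstar i * L i with hipdef
  have hip : ip < 1 := by
    have hpos : 0 < ∑ i, (wstar i - L i) ^ 2 :=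
      Finset.sum_pos' (fun i _ => sq_nonneg _)
        ⟨j, Finset.mem_univ _, lt_of_le_of_ne (sq_nonneg _)
          (Ne.symm (pow_ne_zero 2 (sub_ne_zero.mpr hj)))⟩
    have hexp : ∑ i, (wstar i - L i) ^ 2
        = (∑ i, wstar i ^ 2) - 2 * (∑ i, wstar i * L i) + ∑ i, L i ^ 2 := by
      rw [Finset.mul_sum, ← Finset.sum_sub_distrib, ← Finset.sum_add_distrib]
      exact Finset.sum_congr rfl fun i _ => by ring
    rw [hexp, hsumL, hsumW] at hpos
    linarith
  -- sign at coordinate j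
  set σ : ℝ := if 0 < wstar j - L j then 1 else -1 with hσdef
  have hσz : 0 < σ * (wstar j - L j) := by
    rcases lt_trichotomy (wstar j - L j) 0 with h | h | h
    · rw [hσdef, if_neg (by linarith)]; nlinarith
    · exact absurd (sub_eq_zero.mp h) hj
    · rw [hσdef, if_pos h]; nlinarith
  -- the competitor sign vector
  have hσ1 : σ = 1 ∨ σ = -1 := by
    rw [hσdef]; by_cases h : 0 < wstar j - L j <;> simp [h]
  set s' : Fin n → ℝ := fun i => if i = j then σ else 0 with hs'def
  have hts' : IsTern s' := by
    intro i
    by_cases h : i = j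
    · rcases hσ1 with hσ | hσ <;> simp [hs'def, h, hσ]
    · simp [hs'def, h]
  have hσ0 : σ ≠ 0 := by rcases hσ1 with h | h <;> rw [h] <;> norm_num
  have hns' : s' ≠ 0 := by
    intro h
    have := congrFun h j
    simp [hs'def] at this
    exact hσ0 this
  have hNs' : euclNorm s' = 1 := by
    have : ∑ i, s' i ^ 2 = 1 := by
      rw [hs'def]
      rw [Finset.sum_eq_single j]
      · rcases hσ1 with h | h <;> simp [h]
      · intro b _ hb; simp [hb]
      · intro h; exact absurd (Finset.mem_univ j) h
    rw [euclNorm, this, Real.sqrt_one]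
  -- explicit formula for y on [T, ∞)
  have hyf : ∀ t, T ≤ t → ∀ i,
      y t i = y T i + c * (∑ k ∈ Finset.Ico T t, η k) * (wstar i - L i) := by
    intro t ht
    induction t, ht using Nat.le_induction with
    | base => intro i; simp
    | succ t ht ih =>
      intro i
      rw [hy t i, ih i, hT t ht, Finset.sum_Ico_succ_top ht]
      ring
  -- partial sums diverge
  set S : ℕ → ℝ := fun t => ∑ k ∈ Finset.Ico T t, η k with hSdef
  have hS : Tendsto S atTop atTop := by
    have h1 : Tendsto (fun t => (∑ k ∈ Finset.range t, η k)
        + -(∑ k ∈ Finset.range T, η k)) atTop atTop :=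
      tendsto_atTop_add_const_right atTop _ hηsum
    refine h1.congr' ?_
    filter_upwards [eventually_ge_atTop T] with t ht
    rw [hSdef]
    simp only
    rw [Finset.sum_Ico_eq_sub _ ht]
    ring
  -- final contradiction
  set A : ℝ := σ * y T j - ∑ i, y T i * L i with hAdef
  set β : ℝ := σ * (wstar j - L j) + (1 - ip) with hβdef
  have hβ : 0 < β := by rw [hβdef]; linarith
  have hdiv : Tendsto (fun t => A + c * β * S t) atTop atTop := by
    apply tendsto_atTop_add_const_left
    exact (tendsto_const_mul_atTop_of_pos (by positivity)).mpr hS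
  obtain ⟨t, ht1, ht2⟩ := ((hdiv.eventually_gt_atTop 0).and (eventually_ge_atTop T)).exists
  -- at time t the maximality fails
  obtain ⟨st, htst, hnst, hmax, hwst⟩ := hproj t
  have hwtL : (fun i => st i / euclNorm st) = L := hwst ▸ hT t ht2
  have hmaxL : (∑ i, y t i * st i) / euclNorm st = ∑ i, y t i * L i := by
    rw [Finset.sum_div, ← hwtL]
    exact Finset.sum_congr rfl fun i _ => (mul_div_assoc _ _ _)
  have hineq := hmax s' hts' hns'
  rw [hNs', div_one, hmaxL] at hineq
  have hlhs : ∑ i, y t i * s' i = σ * y t j := by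
    rw [hs'def, Finset.sum_eq_single j]
    · simp [mul_comm]
    · intro b _ hb; simp [hb]
    · intro h; exact absurd (Finset.mem_univ j) h
  rw [hlhs] at hineq
  -- compute σ * y t j - ∑ y t i * L i = A + c * S t * β
  have hcomp : σ * y t j - ∑ i, y t i * L i = A + c * β * S t := by
    have hsum1 : ∑ i, y t i * L i
        = (∑ i, y T i * L i) + c * S t * (ip - 1) := by
      have hterm : ∀ i, y t i * L i
          = y T i * L i + c * S t * (wstar i * L i - L i ^ 2) := by
        intro i; rw [hyf t ht2 i]; ring
      rw [Finset.sum_congr rfl fun i _ => hterm i, Finset.sum_add_distrib,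
        ← Finset.mul_sum, Finset.sum_sub_distrib, hsumL]
    rw [hsum1, hyf t ht2 j, hAdef, hβdef]
    ring
  linarith
end

section
/- Let n ≥ 1 and let y ∈ ℝⁿ be nonzero. Let s be a nonzero vector in {−1,0,1}ⁿ maximizing ⟨y, s'⟩/‖s'‖ over all nonzero s' ∈ {−1,0,1}ⁿ (so that the point of the ternary quantized set nearest to y is a positive multiple of s). If j ∈ {1, …, n} satisfies |y_j| < ‖y‖₁/(5n), then s_j = 0. -/
open Real Filter Set

set_option maxHeartbeats 1000000 in
private lemma stmt16_aux (L c a b r N E d : ℝ) (hL : 0 < L) (hc : 0 ≤ c)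
    (ha0 : 0 < a) (hb0 : 0 < b) (hba : b ≤ a) (har : a ≤ r) (hr0 : 0 < r)
    (hab : (a - b) * (a + b) = 1) (hrn : a * r ≤ N)
    (h3 : (E - d) * a ≤ E * b) (hd : d ≤ c)
    (h7 : L * a ≤ E * r) (h10 : c * (5 * N) < L) (hE0 : 0 < E) : False := by
  have h4 : E * (a - b) ≤ a * c := by
    nlinarith [mul_le_mul_of_nonneg_right hd ha0.le]
  have h6 : E ≤ 2 * a ^ 2 * c := by
    nlinarith [mul_le_mul_of_nonneg_right h4 (add_pos ha0 hb0).le,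
      mul_nonneg (mul_nonneg ha0.le hc) (sub_nonneg.mpr hba)]
  have hN0 : 0 < N := lt_of_lt_of_le (by positivity) hrn
  have h9 : L ≤ 2 * N * c := by
    nlinarith [mul_le_mul_of_nonneg_right h6 hr0.le,
      mul_le_mul_of_nonneg_left hrn
        (mul_nonneg (mul_nonneg (by norm_num : (0:ℝ) ≤ 2) ha0.le) hc)]
  nlinarith [mul_nonneg hN0.le hc]

/-- If `s` is a nonzero ternary sign vector maximizing `⟨y, s'⟩/‖s'‖` (so the nearest
point of `Q₃` to `y` is a positive multiple of `s`), then any coordinate of `y` with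
`|y_j| < ‖y‖₁/(5n)` satisfies `s_j = 0`. -/
theorem stmt16 (n : ℕ) (hn : 1 ≤ n) (y : Fin n → ℝ) (hy : y ≠ 0)
    (s : Fin n → ℝ) (hs : IsTern s) (hs0 : s ≠ 0)
    (hmax : ∀ s' : Fin n → ℝ, IsTern s' → s' ≠ 0 →
      (∑ i, y i * s' i) / euclNorm s' ≤ (∑ i, y i * s i) / euclNorm s)
    (j : Fin n) (hj : |y j| < l1Norm y / (5 * n)) :
    s j = 0 := by
  by_contra hsj
  have hn0 : (0:ℝ) < n := by exact_mod_cast hn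
  set L : ℝ := l1Norm y with hLdef
  have hL : 0 < L := by
    have h1 : 0 < L / (5 * n) := lt_of_le_of_lt (abs_nonneg _) hj
    by_contra h
    push_neg at h
    have : L / (5 * n) ≤ 0 := div_nonpos_of_nonpos_of_nonneg h (by positivity)
    linarith
  set c : ℝ := |y j| with hcdef
  have hc : 0 ≤ c := abs_nonneg _
  -- support of s
  set T : Finset (Fin n) := Finset.univ.filter (fun i => s i ≠ 0) with hT
  have hjT : j ∈ T := by simp [hT, hsj]
  have hsq : ∀ i, s i ^ 2 = if s i ≠ 0 then (1:ℝ) else 0 := by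
    intro i; rcases hs i with h | h | h <;> simp [h]
  set m : ℕ := T.card with hm
  have hMsum : (∑ i, s i ^ 2) = (m : ℝ) := by
    rw [Finset.sum_congr rfl (fun i _ => hsq i), Finset.sum_boole, hm, hT]
  have hm1 : 1 ≤ m := Finset.card_pos.mpr ⟨j, hjT⟩
  have hmn : m ≤ n := le_trans (Finset.card_le_univ T) (by simp)
  set a : ℝ := Real.sqrt m with ha
  have ha0 : 0 < a := Real.sqrt_pos.mpr (by exact_mod_cast hm1)
  have ha2 : a ^ 2 = (m:ℝ) := Real.sq_sqrt (by positivity)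
  have hnorm_s : euclNorm s = a := by rw [euclNorm, hMsum]
  set r : ℝ := Real.sqrt n with hr
  have hr0 : 0 < r := Real.sqrt_pos.mpr hn0
  have hr2 : r ^ 2 = (n:ℝ) := Real.sq_sqrt (by positivity)
  have har : a ≤ r := Real.sqrt_le_sqrt (by exact_mod_cast hmn)
  set E : ℝ := ∑ i, y i * s i with hE
  -- the sign vector of y gives lower bound L / r ≤ E / a
  have hLE : L / r ≤ E / a := by
    set t : Fin n → ℝ := fun i => if y i < 0 then -1 else if 0 < y i then 1 else 0 with ht
    have htern : IsTern t := by
      intro i; by_cases h1 : y i < 0 <;> by_cases h2 : 0 < y i <;> simp [ht, h1, h2]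
    obtain ⟨i0, hi0⟩ := Function.ne_iff.mp hy
    have ht0 : t ≠ 0 := by
      intro h
      have := congrFun h i0
      rcases lt_trichotomy (y i0) 0 with h1 | h1 | h1
      · simp [ht, h1] at this
      · exact hi0 h1
      · simp [ht, not_lt.mpr h1.le, h1] at this
    have hsum : (∑ i, y i * t i) = L := by
      rw [hLdef, l1Norm]
      refine Finset.sum_congr rfl fun i _ => ?_
      rcases lt_trichotomy (y i) 0 with h1 | h1 | h1
      · simp [ht, h1, abs_of_neg h1]
      · simp [ht, h1]
      · simp [ht, not_lt.mpr h1.le, h1, abs_of_pos h1]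
    have htn : euclNorm t ≤ r := by
      rw [euclNorm, hr]
      apply Real.sqrt_le_sqrt
      calc (∑ i, t i ^ 2) ≤ ∑ _i : Fin n, (1:ℝ) := by
            refine Finset.sum_le_sum fun i _ => ?_
            rcases htern i with h | h | h <;> rw [h] <;> norm_num
        _ = n := by simp
    have htpos : 0 < euclNorm t := by
      rw [euclNorm]
      apply Real.sqrt_pos.mpr
      obtain ⟨i1, hi1⟩ := Function.ne_iff.mp ht0
      have hi1' : t i1 ≠ 0 := by simpa using hi1
      have hpos : 0 < t i1 ^ 2 := by
        rcases htern i1 with h | h | h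
        · rw [h]; norm_num
        · exact absurd h hi1'
        · rw [h]; norm_num
      exact lt_of_lt_of_le hpos
        (Finset.single_le_sum (f := fun i => t i ^ 2) (fun i _ => sq_nonneg _) (Finset.mem_univ i1))
    have h1 := hmax t htern ht0
    rw [hsum, hnorm_s] at h1
    exact le_trans (div_le_div_of_nonneg_left hL.le htpos htn) h1
  have hE0 : 0 < E := by
    have h0 : 0 < L / r := by positivity
    rcases div_pos_iff.mp (lt_of_lt_of_le h0 hLE) with ⟨h, _⟩ | ⟨_, h⟩
    · exact h
    · linarith
  -- case split on m
  rcases eq_or_lt_of_le hm1 with hm1' | hm2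
  · -- m = 1 : s = ± e_j, value is |y j|, too small
    have hTj : T = {j} := by
      have := Finset.card_eq_one.mp hm1'.symm
      obtain ⟨x, hx⟩ := this
      rw [hx] at hjT
      rw [Finset.mem_singleton] at hjT
      rw [hx, hjT]
    have hEval : E = y j * s j := by
      rw [hE]
      apply Finset.sum_eq_single j
      · intro i _ hij
        have : s i = 0 := by
          by_contra h
          have : i ∈ T := by simp [hT, h]
          rw [hTj, Finset.mem_singleton] at this
          exact hij this
        simp [this]
      · simp
    have hEc : E ≤ c := by
      rw [hEval, hcdef]
      calc y j * s j ≤ |y j * s j| := le_abs_self _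
        _ = |y j| * |s j| := abs_mul _ _
        _ ≤ |y j| * 1 := by
            apply mul_le_mul_of_nonneg_left _ (abs_nonneg _)
            rcases hs j with h | h | h <;> simp [h]
        _ = |y j| := mul_one _
    have ha1 : a = 1 := by rw [ha, ← hm1']; simp
    rw [ha1, div_one] at hLE
    -- L / r ≤ E ≤ c < L / (5n), but L/(5n) ≤ L/r since r ≤ n ≤ 5n
    have hrn : r ≤ 5 * n := by nlinarith
    have : L / (5 * n) ≤ L / r := div_le_div_of_nonneg_left hL.le hr0 hrn
    linarith
  · -- m ≥ 2 : drop coordinate j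
    set s' : Fin n → ℝ := Function.update s j 0 with hs'
    have htern' : IsTern s' := by
      intro i
      by_cases h : i = j
      · subst h; simp [hs']
      · rw [hs', Function.update_of_ne h]; exact hs i
    have hs'0 : s' ≠ 0 := by
      have h2 : 1 < T.card := by rw [← hm]; exact hm2
      obtain ⟨i1, hi1T, hi1j⟩ : ∃ i1 ∈ T, i1 ≠ j := by
        obtain ⟨x, hx, y', hy', hxy⟩ := Finset.one_lt_card.mp h2
        by_cases h : x = j
        · exact ⟨y', hy', by rw [← h]; exact fun hh => hxy hh.symm⟩
        · exact ⟨x, hx, h⟩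
      intro h
      have := congrFun h i1
      rw [hs', Function.update_of_ne hi1j] at this
      have : s i1 ≠ 0 := by simp [hT] at hi1T; exact hi1T
      simp_all
    have hsj2 : s j ^ 2 = 1 := by rcases hs j with h | h | h <;> simp [h] at hsj ⊢
    have hsum2 : (∑ i, s' i ^ 2) = (m:ℝ) - 1 := by
      have h1 : (∑ i, s' i ^ 2) = (∑ i, s i ^ 2) - s j ^ 2 := by
        rw [← Finset.add_sum_erase _ (fun i => s' i ^ 2) (Finset.mem_univ j),
            ← Finset.add_sum_erase _ (fun i => s i ^ 2) (Finset.mem_univ j)]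
        have hj0 : s' j = 0 := by simp [hs']
        have heq : ∑ i ∈ Finset.univ.erase j, s' i ^ 2 = ∑ i ∈ Finset.univ.erase j, s i ^ 2 :=
          Finset.sum_congr rfl fun i hi => by
            rw [hs', Function.update_of_ne (Finset.ne_of_mem_erase hi)]
        rw [hj0, heq]; ring
      rw [h1, hMsum, hsj2]
    set b : ℝ := Real.sqrt ((m:ℝ) - 1) with hb
    have hm2' : (2:ℝ) ≤ m := by exact_mod_cast hm2
    have hb0 : 0 < b := Real.sqrt_pos.mpr (by linarith)
    have hb2 : b ^ 2 = (m:ℝ) - 1 := Real.sq_sqrt (by linarith)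
    have hnorm_s' : euclNorm s' = b := by rw [euclNorm, hsum2]
    have hsum3 : (∑ i, y i * s' i) = E - y j * s j := by
      rw [hE]
      rw [← Finset.add_sum_erase _ (fun i => y i * s' i) (Finset.mem_univ j),
          ← Finset.add_sum_erase _ (fun i => y i * s i) (Finset.mem_univ j)]
      have hj0 : s' j = 0 := by simp [hs']
      have heq : ∑ i ∈ Finset.univ.erase j, y i * s' i
          = ∑ i ∈ Finset.univ.erase j, y i * s i :=
        Finset.sum_congr rfl fun i hi => by
          rw [hs', Function.update_of_ne (Finset.ne_of_mem_erase hi)]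
      rw [hj0, heq]; ring
    have h2 := hmax s' htern' hs'0
    rw [hnorm_s, hnorm_s', hsum3] at h2
    -- (E - y j * s j) / b ≤ E / a  ⇒  (E - y_j s_j) * a ≤ E * b
    have h3 : (E - y j * s j) * a ≤ E * b := (div_le_div_iff₀ hb0 ha0).mp h2
    have hd : y j * s j ≤ c := by
      rw [hcdef]
      calc y j * s j ≤ |y j * s j| := le_abs_self _
        _ = |y j| * |s j| := abs_mul _ _
        _ ≤ |y j| * 1 := by
            apply mul_le_mul_of_nonneg_left _ (abs_nonneg _)
            rcases hs j with h | h | h <;> simp [h]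
        _ = |y j| := mul_one _
    have hba : b ≤ a := by
      rw [hb, ha]; exact Real.sqrt_le_sqrt (by linarith)
    -- L * a ≤ E * r
    have h7 : L * a ≤ E * r := (div_le_div_iff₀ hr0 ha0).mp hLE
    have h10 : c * (5 * n) < L := (lt_div_iff₀ (by positivity)).mp hj
    have h5 : (a - b) * (a + b) = 1 := by linear_combination ha2 - hb2
    have h8 : a * r ≤ (n:ℝ) := by
      nlinarith [mul_le_mul_of_nonneg_right har hr0.le]
    exact stmt16_aux L c a b r n E (y j * s j) hL hc ha0 hb0 hba har hr0
      h5 h8 h3 hd h7 h10 hE0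
end
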